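/- Let F be an algebraically closed field of characteristic zero and let L be an n-dimensional filiform Lie algebra over F with n ≥ 4, equipped with a basis e_1, …, e_n satisfying [e_1, e_i] = e_{i+1} for all 2 ≤ i ≤ n−1. For α, β ∈ F define the linear operator D on L by D(Σ_{k=1}^n x_k e_k) = α x_2 e_{n−1} + β x_3 e_n. Then D is a derivation of L if and only if α = β. -/

import Mathlib

/-!
The derivation defect `B x y = D ⁅x, y⁆ - ⁅D x, y⁆ - ⁅x, D y⁆` of a linear map is bilinear and
alternating. In an adapted basis of a filiform algebra the brackets with `e₁` produce
`e_{k+2}, …, eₙ` inside `L^k`, and the dimension count forces `L^k = span (e_{k+2}, …, eₙ)`.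
Hence `eₙ` is central, `e_{n-1}` commutes with `L^1`, and `D` kills `L^2`; so `B` vanishes as soon
as one argument is a basis vector `e_j` with `j ≥ 3`, and everything reduces to
`B e₁ e₂ = (β - α) • eₙ`.
-/

open LieModule

section LowerCentralSeries

variable {R L M : Type*} [CommRing R] [LieRing L] [LieAlgebra R L]
  [AddCommGroup M] [Module R M] [LieRingModule L M]

theorem lie_mem_lowerCentralSeries_succ (x : L) {m : M} {k : ℕ}
    (hm : m ∈ lowerCentralSeries R L M k) : ⁅x, m⁆ ∈ lowerCentralSeries R L M (k + 1) := by
  rw [lowerCentralSeries_succ]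
  exact LieSubmodule.lie_mem_lie (LieSubmodule.mem_top x) hm

theorem lie_lie_mem_lowerCentralSeries_add_two (x y : L) {m : M} {k : ℕ}
    (hm : m ∈ lowerCentralSeries R L M k) : ⁅⁅x, y⁆, m⁆ ∈ lowerCentralSeries R L M (k + 2) := by
  rw [lie_lie]
  exact sub_mem (lie_mem_lowerCentralSeries_succ x (lie_mem_lowerCentralSeries_succ y hm))
    (lie_mem_lowerCentralSeries_succ y (lie_mem_lowerCentralSeries_succ x hm))

end LowerCentralSeries

section DerivationCriterion

variable {R L : Type*} [CommRing R] [LieRing L] [LieAlgebra R L]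

theorem forall_map_lie_iff_of_basis {n : ℕ} (hn : 1 < n) (b : Module.Basis (Fin n) R L)
    (D : L →ₗ[R] L) (h : ∀ x (j : Fin n), 2 ≤ j.val → D ⁅x, b j⁆ = ⁅D x, b j⁆ + ⁅x, D (b j)⁆) :
    (∀ x y : L, D ⁅x, y⁆ = ⁅D x, y⁆ + ⁅x, D y⁆) ↔
      D ⁅b ⟨0, by omega⟩, b ⟨1, hn⟩⁆ =
        ⁅D (b ⟨0, by omega⟩), b ⟨1, hn⟩⁆ + ⁅b ⟨0, by omega⟩, D (b ⟨1, hn⟩)⁆ := by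
  refine ⟨fun hD => hD _ _, fun h01 x y => ?_⟩
  let B : L →ₗ[R] L →ₗ[R] L := LinearMap.mk₂ R (fun x y => D ⁅x, y⁆ - ⁅D x, y⁆ - ⁅x, D y⁆)
    (fun _ _ _ => by simp only [add_lie, map_add]; abel)
    (fun _ _ _ => by simp only [smul_lie, map_smul, smul_sub])
    (fun _ _ _ => by simp only [lie_add, map_add]; abel)
    (fun _ _ _ => by simp only [lie_smul, map_smul, smul_sub])
  have hB : ∀ x y, B x y = D ⁅x, y⁆ - ⁅D x, y⁆ - ⁅x, D y⁆ := fun _ _ => rfl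
  have hB_alt : B.IsAlt := fun x => by
    rw [hB, lie_self, map_zero, ← lie_skew, zero_sub, neg_neg, sub_self]
  have hB_basis : ∀ i j, 2 ≤ j.val → B (b i) (b j) = 0 := fun i j hj => by
    rw [hB, h _ _ hj, sub_sub, sub_self]
  suffices B = 0 by
    rw [← sub_eq_zero, ← sub_sub, ← hB, this, LinearMap.zero_apply, LinearMap.zero_apply]
  refine LinearMap.ext_basis b b fun i j => ?_
  rw [LinearMap.zero_apply, LinearMap.zero_apply]
  rcases le_or_gt 2 j.val with hj | hj
  · exact hB_basis i j hj
  rcases le_or_gt 2 i.val with hi | hi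
  · rw [← hB_alt.neg, hB_basis j i hi, neg_zero]
  obtain ⟨i, hi'⟩ := i
  obtain ⟨j, hj'⟩ := j
  interval_cases i <;> interval_cases j
  · exact hB_alt _
  · rw [hB, h01, sub_sub, sub_self]
  · rw [← hB_alt.neg, hB, h01, sub_sub, sub_self, neg_zero]
  · exact hB_alt _

end DerivationCriterion

section Filiform

variable {R L : Type*} [CommRing R] [LieRing L] [LieAlgebra R L] {n : ℕ}

/-- `b ⟨k, _⟩` is the vector `e_{k+1}` of the paper, so this says `⁅e₁, eᵢ⁆ = e_{i+1}`. -/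
def Module.Basis.IsFiliformAdapted (b : Module.Basis (Fin n) R L) : Prop :=
  ∀ i : ℕ, ∀ _ : 1 ≤ i, ∀ _ : i ≤ n - 2, ⁅b ⟨0, by omega⟩, b ⟨i, by omega⟩⁆ = b ⟨i + 1, by omega⟩

namespace Module.Basis.IsFiliformAdapted

variable {b : Module.Basis (Fin n) R L} (hb : b.IsFiliformAdapted)
include hb

theorem lie_basis_zero_pred {j : Fin n} (hj : 2 ≤ j.val) :
    ⁅b ⟨0, by omega⟩, b ⟨j.val - 1, by omega⟩⁆ = b j := by
  obtain ⟨_ | i, hi⟩ := j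
  · simp at hj
  · exact hb i (by simp only at hj; omega) (by omega)

theorem basis_mem_lowerCentralSeries {k : ℕ} {j : Fin n} (hkj : k < j.val) :
    b j ∈ lowerCentralSeries R L L k := by
  induction k generalizing j with
  | zero => exact LieSubmodule.mem_top _
  | succ k ih =>
    rw [← hb.lie_basis_zero_pred (by omega)]
    exact lie_mem_lowerCentralSeries_succ _ (ih (by simp only; omega))

theorem lie_basis_sub_one_eq_zero (hn : 2 ≤ n) (hbot : lowerCentralSeries R L L (n - 1) = ⊥)
    (x : L) : ⁅x, b ⟨n - 1, by omega⟩⁆ = 0 := by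
  have hmem := lie_mem_lowerCentralSeries_succ x
    (hb.basis_mem_lowerCentralSeries (k := n - 2) (j := ⟨n - 1, by omega⟩) (by simp only; omega))
  rwa [show n - 2 + 1 = n - 1 by omega, hbot, LieSubmodule.mem_bot] at hmem

theorem basis_sub_two_lie_basis_eq_zero (hn : 3 ≤ n)
    (hbot : lowerCentralSeries R L L (n - 1) = ⊥) {j : Fin n} (hj : 2 ≤ j.val) :
    ⁅b ⟨n - 2, by omega⟩, b j⁆ = 0 := by
  have hmem := lie_lie_mem_lowerCentralSeries_add_two (b ⟨0, by omega⟩) (b ⟨j.val - 1, by omega⟩)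
    (hb.basis_mem_lowerCentralSeries (k := n - 3) (j := ⟨n - 2, by omega⟩) (by simp only; omega))
  rw [hb.lie_basis_zero_pred hj, show n - 3 + 2 = n - 1 by omega, hbot,
    LieSubmodule.mem_bot] at hmem
  rw [← lie_skew, hmem, neg_zero]

end Module.Basis.IsFiliformAdapted

end Filiform

section FiliformOverField

variable {K L : Type*} [Field K] [LieRing L] [LieAlgebra K L] {n : ℕ}

namespace Module.Basis.IsFiliformAdapted

variable {b : Module.Basis (Fin n) K L} (hb : b.IsFiliformAdapted)
include hb

theorem lowerCentralSeries_eq_span {k : Fin n}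
    (hk : Module.finrank K (lowerCentralSeries K L L k) = n - k - 1) :
    (lowerCentralSeries K L L k).toSubmodule = Submodule.span K (b '' Set.Ioi k) := by
  have : FiniteDimensional K L := Module.Finite.of_basis b
  refine (Submodule.eq_of_le_of_finrank_le ?_ ?_).symm
  · rw [Submodule.span_le]
    rintro _ ⟨j, hj, rfl⟩
    exact hb.basis_mem_lowerCentralSeries hj
  · have hli : LinearIndependent K (fun j : Set.Ioi k => b j) :=
      b.linearIndependent.comp _ Subtype.val_injective
    rw [Set.image_eq_range, finrank_span_eq_card hli]
    simp only [Set.mem_Ioi, Finset.mem_Ioi, implies_true, Fintype.card_ofFinset, Fin.card_Ioi]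
    exact hk.trans_le (by omega)

theorem repr_eq_zero_of_mem_lowerCentralSeries {k : Fin n}
    (hk : Module.finrank K (lowerCentralSeries K L L k) = n - k - 1) {z : L}
    (hz : z ∈ lowerCentralSeries K L L k) {j : Fin n} (hj : j ≤ k) : b.repr z j = 0 := by
  rw [← LieSubmodule.mem_toSubmodule, hb.lowerCentralSeries_eq_span hk, b.mem_span_image] at hz
  by_contra hzj
  exact (hz (Finsupp.mem_support_iff.2 hzj)).not_ge hj

end Module.Basis.IsFiliformAdapted

end FiliformOverField

theorem filiform_operator_is_derivation_iff
    (F : Type*) [Field F]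
    (L : Type*) [LieRing L] [LieAlgebra F L]
    (n : ℕ) (hn : 4 ≤ n)
    (hfil : ∀ k : ℕ, 1 ≤ k → k ≤ n - 1 →
      Module.finrank F ↥(LieModule.lowerCentralSeries F L L k) = n - k - 1)
    (b : Module.Basis (Fin n) F L)
    (hb : ∀ i : ℕ, ∀ h1 : 1 ≤ i, ∀ h2 : i ≤ n - 2,
      ⁅b ⟨0, by omega⟩, b ⟨i, by omega⟩⁆ = b ⟨i + 1, by omega⟩)
    (α β : F)
    (D : L →ₗ[F] L)
    (hD : ∀ x : L,
      D x = (α * b.repr x ⟨1, by omega⟩) • b ⟨n - 2, by omega⟩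
          + (β * b.repr x ⟨2, by omega⟩) • b ⟨n - 1, by omega⟩) :
    (∀ x y : L, D ⁅x, y⁆ = ⁅D x, y⁆ + ⁅x, D y⁆) ↔ α = β := by
  replace hb : b.IsFiliformAdapted := hb
  have : FiniteDimensional F L := Module.Finite.of_basis b
  have hbot : lowerCentralSeries F L L (n - 1) = ⊥ := by
    rw [← LieSubmodule.toSubmodule_eq_bot, ← Submodule.finrank_eq_zero]
    exact (hfil (n - 1) (by omega) le_rfl).trans (by omega)
  have hD_lcs_two : ∀ z ∈ lowerCentralSeries F L L 2, D z = 0 := fun z hz => by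
    have hz_coord := fun (j : Fin n) (hj : j.val ≤ 2) =>
      hb.repr_eq_zero_of_mem_lowerCentralSeries (k := ⟨2, by omega⟩)
        (hfil 2 (by omega) (by omega)) hz (j := j) hj
    rw [hD, hz_coord _ (by simp), hz_coord _ le_rfl]
    simp
  have hcentral := hb.lie_basis_sub_one_eq_zero (by omega) hbot
  rw [forall_map_lie_iff_of_basis (by omega) b D fun x j hj => ?_]
  · have h01 : ⁅b ⟨0, by omega⟩, b ⟨1, by omega⟩⁆ = b ⟨2, by omega⟩ := hb 1 le_rfl (by omega)
    have h0 : ⁅b ⟨0, by omega⟩, b ⟨n - 2, by omega⟩⁆ = b ⟨n - 1, by omega⟩ :=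
      hb.lie_basis_zero_pred (j := ⟨n - 1, by omega⟩) (by simp only; omega)
    have hDb0 : D (b ⟨0, by omega⟩) = 0 := by simp [hD]
    have hDb1 : D (b ⟨1, by omega⟩) = α • b ⟨n - 2, by omega⟩ := by simp [hD]
    have hDb2 : D (b ⟨2, by omega⟩) = β • b ⟨n - 1, by omega⟩ := by simp [hD]
    rw [h01, hDb0, hDb1, hDb2, zero_lie, zero_add, lie_smul, h0]
    exact (smul_left_injective F (b.ne_zero _)).eq_iff.trans eq_comm
  · rw [hD_lcs_two _ (lie_mem_lowerCentralSeries_succ x (hb.basis_mem_lowerCentralSeries hj)),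
      hD x, hD (b j), add_lie, smul_lie, smul_lie,
      hb.basis_sub_two_lie_basis_eq_zero (by omega) hbot hj, ← lie_skew, hcentral, lie_add,
      lie_smul, lie_smul, hcentral]
    simp [Finsupp.single_apply, Fin.ext_iff, show (j : ℕ) ≠ 1 by omega]
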